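/- arXiv:1911.06862 — 2 statements merged into one kernel-verified Lean document; each statement's English description precedes it below -/
import Mathlib

section
/- Let M = {(x, y, z) ∈ ℤ³ : -2 ≤ x ≤ 2, -2 ≤ y ≤ 2, y - 6 ≤ z ≤ -3}, and let G be the group of permutations of ℤ³ generated by s(x,y,z) = (z,x,y) and ι(x,y,z) = (-y,-x,-z). If t, t' ∈ M and g(t) = t' for some g ∈ G, then t = t'. In other words, no two distinct elements of M are equivalent under G. -/
set_option maxHeartbeats 1600000 in
theorem stmt_9 (s ι : Equiv.Perm (ℤ × ℤ × ℤ))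
    (hs : ∀ x y z : ℤ, s (x, y, z) = (z, x, y))
    (hι : ∀ x y z : ℤ, ι (x, y, z) = (-y, -x, -z))
    (M : Set (ℤ × ℤ × ℤ))
    (hM : M = {t | -2 ≤ t.1 ∧ t.1 ≤ 2 ∧ -2 ≤ t.2.1 ∧ t.2.1 ≤ 2 ∧
      t.2.1 - 6 ≤ t.2.2 ∧ t.2.2 ≤ -3})
    (t t' : ℤ × ℤ × ℤ) (ht : t ∈ M) (ht' : t' ∈ M)
    (g : Equiv.Perm (ℤ × ℤ × ℤ))
    (hg : g ∈ Subgroup.closure {s, ι})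
    (hgt : g t = t') : t = t' := by
  have key : ∀ gg ∈ Subgroup.closure ({s, ι} : Set (Equiv.Perm (ℤ × ℤ × ℤ))),
      ∀ x y z : ℤ, gg (x, y, z) = (x, y, z) ∨ gg (x, y, z) = (z, x, y) ∨
      gg (x, y, z) = (y, z, x) ∨ gg (x, y, z) = (-y, -x, -z) ∨
      gg (x, y, z) = (-x, -z, -y) ∨ gg (x, y, z) = (-z, -y, -x) := by
    intro gg hgg
    induction hgg using Subgroup.closure_induction with
    | mem h hh =>
      rcases hh with h1 | h1 <;> subst h1 <;> intro x y z
      · exact Or.inr (Or.inl (hs x y z))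
      · exact Or.inr (Or.inr (Or.inr (Or.inl (hι x y z))))
    | one => intro x y z; simp
    | mul a b _ _ ha hb =>
      intro x y z
      rcases hb x y z with h | h | h | h | h | h <;>
        rw [Equiv.Perm.mul_apply, h]
      · exact ha x y z
      · rcases ha z x y with h2 | h2 | h2 | h2 | h2 | h2 <;> rw [h2] <;>
          simp only [Prod.mk.injEq, neg_neg, eq_self_iff_true, and_self,
            or_true, true_or]
      · rcases ha y z x with h2 | h2 | h2 | h2 | h2 | h2 <;> rw [h2] <;>
          simp only [Prod.mk.injEq, neg_neg, eq_self_iff_true, and_self,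
            or_true, true_or]
      · rcases ha (-y) (-x) (-z) with h2 | h2 | h2 | h2 | h2 | h2 <;> rw [h2] <;>
          simp only [Prod.mk.injEq, neg_neg, eq_self_iff_true, and_self,
            or_true, true_or]
      · rcases ha (-x) (-z) (-y) with h2 | h2 | h2 | h2 | h2 | h2 <;> rw [h2] <;>
          simp only [Prod.mk.injEq, neg_neg, eq_self_iff_true, and_self,
            or_true, true_or]
      · rcases ha (-z) (-y) (-x) with h2 | h2 | h2 | h2 | h2 | h2 <;> rw [h2] <;>
          simp only [Prod.mk.injEq, neg_neg, eq_self_iff_true, and_self,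
            or_true, true_or]
    | inv a _ ha =>
      intro x y z
      obtain ⟨⟨p1, p2, p3⟩, hp⟩ : ∃ p : ℤ × ℤ × ℤ, a⁻¹ (x, y, z) = p := ⟨_, rfl⟩
      have haq : a (p1, p2, p3) = (x, y, z) := by
        rw [← hp]; exact Equiv.apply_symm_apply a _
      have h := ha p1 p2 p3
      rw [haq] at h
      rw [hp]
      rcases h with h | h | h | h | h | h <;>
        simp only [Prod.mk.injEq] at h <;>
        obtain ⟨h1, h2, h3⟩ := h <;> subst h1 <;> subst h2 <;> subst h3 <;>
        simp only [Prod.mk.injEq, neg_neg, eq_self_iff_true, and_self,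
          or_true, true_or]
  subst hM
  obtain ⟨x, y, z⟩ := t
  rcases key g hg x y z with h | h | h | h | h | h <;> rw [h] at hgt <;> subst hgt <;>
    simp only [Set.mem_setOf_eq] at ht ht' <;>
    clear key hs hι hg <;>
    simp only [Prod.mk.injEq] <;> omega
end

section
/- Let n, m, k₁, k₂ be nonnegative integers with k₁ + n(n+1)/2 ≥ k₂ + m(m+1)/2. Set Δ' = k₁ + n(n+1)/2 - k₂ - m(m+1)/2 + 2·max(n,m) + 2 and let e be an integer with e > 2Δ' + 2. Define F i = e + k₁ + i(i+1)/2 for 0 ≤ i ≤ n, G i = e + k₂ + i(i+1)/2 for 0 ≤ i ≤ m, c = max(F n, G m) + max(n,m) + 1, and y = ⌈e/2⌉ - 1. Then: (a) F 1 - F 0 = 1 and F (i-1) - 2·F i + F (i+1) = 1 for 1 ≤ i ≤ n-1; (b) G 1 - G 0 = 1 and G (i-1) - 2·G i + G (i+1) = 1 for 1 ≤ i ≤ m-1; (c) -2·F n + c + F (n-1) > 0 and -2·G m + c + G (m-1) > 0 (when n ≥ 1, resp. m ≥ 1); (d) -2·c + F n + G m + y > 0; (e) -2·y + c > 0. -/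
theorem Thelp (i : ℤ) : i * (i + 1) / 2 = (i - 1) * i / 2 + i := by
  have h : i * (i + 1) = (i - 1) * i + i * 2 := by ring
  rw [h, Int.add_mul_ediv_right _ _ (by norm_num : (2:ℤ) ≠ 0)]

theorem Tnonneg (i : ℤ) (h : 0 ≤ i) : 0 ≤ i * (i + 1) / 2 :=
  Int.ediv_nonneg (by positivity) (by norm_num)

/-- Arithmetic core of Proposition 3.20: the explicit function on a non-degenerate
curve structure of type d₂ has the stated (positive) intersection numbers. -/
theorem stmt_10 (n m k₁ k₂ : ℤ) (hn : 0 ≤ n) (hm : 0 ≤ m) (hk₁ : 0 ≤ k₁) (hk₂ : 0 ≤ k₂)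
    (hbal : k₁ + n * (n + 1) / 2 ≥ k₂ + m * (m + 1) / 2)
    (Δ' : ℤ) (hΔ' : Δ' = k₁ + n * (n + 1) / 2 - k₂ - m * (m + 1) / 2 + 2 * max n m + 2)
    (e : ℤ) (he : e > 2 * Δ' + 2)
    (F G : ℤ → ℤ)
    (hF : ∀ i : ℤ, F i = e + k₁ + i * (i + 1) / 2)
    (hG : ∀ i : ℤ, G i = e + k₂ + i * (i + 1) / 2)
    (c y : ℤ) (hc : c = max (F n) (G m) + max n m + 1)
    (hy : y = ⌈(e : ℚ) / 2⌉ - 1) :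
    (F 1 - F 0 = 1 ∧ ∀ i : ℤ, 1 ≤ i → i ≤ n - 1 → F (i - 1) - 2 * F i + F (i + 1) = 1) ∧
    (G 1 - G 0 = 1 ∧ ∀ i : ℤ, 1 ≤ i → i ≤ m - 1 → G (i - 1) - 2 * G i + G (i + 1) = 1) ∧
    ((1 ≤ n → -2 * F n + c + F (n - 1) > 0) ∧ (1 ≤ m → -2 * G m + c + G (m - 1) > 0)) ∧
    (-2 * c + F n + G m + y > 0) ∧
    (-2 * y + c > 0) := by
  -- second difference helper
  have hsecond : ∀ H : ℤ → ℤ, ∀ kk : ℤ, (∀ i : ℤ, H i = e + kk + i * (i + 1) / 2) →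
      ∀ i : ℤ, H (i - 1) - 2 * H i + H (i + 1) = 1 := by
    intro H kk hH i
    have h1 := Thelp i
    have h2 : (i + 1) * (i + 1 + 1) / 2 = i * (i + 1) / 2 + (i + 1) := by
      have := Thelp (i + 1)
      simpa using this
    rw [hH, hH, hH]
    have h3 : (i - 1) * (i - 1 + 1) / 2 = (i - 1) * i / 2 := by ring_nf
    rw [h3, h2]
    omega
  -- ceiling bounds
  have hz1 : (e : ℚ) ≤ 2 * ⌈(e : ℚ) / 2⌉ := by
    have := Int.le_ceil ((e : ℚ) / 2)
    linarith
  have hz2 : (⌈(e : ℚ) / 2⌉ : ℚ) < (e : ℚ) / 2 + 1 := Int.ceil_lt_add_one _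
  have hy1 : e ≤ 2 * ⌈(e : ℚ) / 2⌉ := by exact_mod_cast hz1
  have hy2 : 2 * ⌈(e : ℚ) / 2⌉ < e + 2 := by
    have h : (2 * ⌈(e : ℚ) / 2⌉ : ℚ) < e + 2 := by linarith
    exact_mod_cast h
  have hFn : F n ≥ G m := by rw [hF, hG]; omega
  have hmax : max (F n) (G m) = F n := max_eq_left hFn
  have hTn : 0 ≤ n * (n + 1) / 2 := Tnonneg n hn
  have hTm : 0 ≤ m * (m + 1) / 2 := Tnonneg m hm
  have hFdiff : F n = F (n - 1) + n := by
    rw [hF, hF]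
    have h3 : (n - 1) * (n - 1 + 1) / 2 = (n - 1) * n / 2 := by ring_nf
    rw [h3, Thelp n]; ring
  have hGdiff : G m = G (m - 1) + m := by
    rw [hG, hG]
    have h3 : (m - 1) * (m - 1 + 1) / 2 = (m - 1) * m / 2 := by ring_nf
    rw [h3, Thelp m]; ring
  refine ⟨⟨?_, fun i _ _ => hsecond F k₁ hF i⟩, ⟨?_, fun i _ _ => hsecond G k₂ hG i⟩, ⟨?_, ?_⟩, ?_, ?_⟩
  · rw [hF, hF]; norm_num
  · rw [hG, hG]; norm_num
  · intro h1n
    have : max n m ≥ n := le_max_left n m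
    omega
  · intro h1m
    have h4 : max (F n) (G m) ≥ G m := le_max_right _ _
    have : max n m ≥ m := le_max_right n m
    omega
  · rw [hc, hmax, hF n, hG m]
    omega
  · have hFnge : F n ≥ e := by rw [hF]; omega
    rw [hc, hmax]
    have : max n m ≥ 0 := le_trans hn (le_max_left n m)
    omega
end
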